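/- The fractional s-perimeter is strictly subadditive on disjoint sets of positive measure: if E and F are measurable subsets of ℝ^N with |E ∩ F| = 0, |E| > 0, |F| > 0, and Per_s(E), Per_s(F) < ∞, then Per_s(E ∪ F) < Per_s(E) + Per_s(F). -/

import Mathlib

open MeasureTheory
open scoped ENNReal

/-- The fractional `s`-perimeter of a measurable set `E ⊆ ℝ^N`. -/
noncomputable def fracPerimeter (N : ℕ) (s : ℝ) (E : Set (EuclideanSpace ℝ (Fin N))) : ℝ≥0∞ :=
  ∫⁻ x in E, ∫⁻ y in Eᶜ, ENNReal.ofReal (‖x - y‖ ^ (-((N : ℝ) + s)))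

/-!
Write `L(A, B) = ∫_A ∫_B K(x, y) dy dx`, so that `Per_s(E) = L(E, Eᶜ)` for the kernel
`K(x, y) = |x - y|^{-(N+s)}`. For disjoint `E`, `F` we have `Eᶜ = (E ∪ F)ᶜ ∪ F` and
`Fᶜ = (E ∪ F)ᶜ ∪ E`, and splitting the integrals gives
`Per_s(E) + Per_s(F) = Per_s(E ∪ F) + L(E, F) + L(F, E)`.
The interaction term `L(E, F)` is positive because `K > 0` off the diagonal and `E`, `F` have
positive measure; all terms being finite, the inequality is strict. Up to a null set, `F` may be
replaced by `F \ E`, which is disjoint from `E`.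
-/

open Function Set

theorem Set.compl_eq_compl_union_union_of_disjoint {α : Type*} {E F : Set α}
    (hEF : Disjoint E F) : Eᶜ = (E ∪ F)ᶜ ∪ F := by
  rw [compl_union, union_comm, union_inter_distrib_left, union_compl_self, inter_univ,
    union_eq_right.mpr hEF.symm.subset_compl_right]

namespace MeasureTheory

variable {α : Type*} [MeasurableSpace α] {μ : Measure α} {K : α → α → ℝ≥0∞}
  {A B C : Set α}

noncomputable def kernelInteraction (μ : Measure α) (K : α → α → ℝ≥0∞) (A B : Set α) : ℝ≥0∞ :=
  ∫⁻ x in A, ∫⁻ y in B, K x y ∂μ ∂μ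

theorem kernelInteraction_congr_ae {A' B' : Set α} (hA : A =ᵐ[μ] A') (hB : B =ᵐ[μ] B') :
    kernelInteraction μ K A B = kernelInteraction μ K A' B' := by
  unfold kernelInteraction
  rw [setLIntegral_congr hA]
  exact lintegral_congr fun x => setLIntegral_congr hB

theorem kernelInteraction_union_left (hB : MeasurableSet B) (hAB : Disjoint A B) :
    kernelInteraction μ K (A ∪ B) C = kernelInteraction μ K A C + kernelInteraction μ K B C :=
  lintegral_union hB hAB

theorem measurable_setLIntegral_kernel [SFinite μ] (hK : Measurable (uncurry K)) (B : Set α) :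
    Measurable fun x => ∫⁻ y in B, K x y ∂μ :=
  hK.lintegral_prod_right'

theorem kernelInteraction_union_right [SFinite μ] (hK : Measurable (uncurry K))
    (hC : MeasurableSet C) (hBC : Disjoint B C) :
    kernelInteraction μ K A (B ∪ C) = kernelInteraction μ K A B + kernelInteraction μ K A C := by
  unfold kernelInteraction
  simp_rw [lintegral_union hC hBC]
  exact lintegral_add_left (measurable_setLIntegral_kernel hK B) _

theorem kernelInteraction_add_compl [SFinite μ] (hK : Measurable (uncurry K))
    {E F : Set α} (hE : MeasurableSet E) (hF : MeasurableSet F) (hEF : Disjoint E F) :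
    kernelInteraction μ K E Eᶜ + kernelInteraction μ K F Fᶜ =
      kernelInteraction μ K (E ∪ F) (E ∪ F)ᶜ +
        (kernelInteraction μ K E F + kernelInteraction μ K F E) := by
  rw [compl_eq_compl_union_union_of_disjoint hEF,
    compl_eq_compl_union_union_of_disjoint hEF.symm, union_comm F E,
    kernelInteraction_union_right hK hF (disjoint_compl_left.mono_right subset_union_right),
    kernelInteraction_union_right hK hE (disjoint_compl_left.mono_right subset_union_left),
    kernelInteraction_union_left hF hEF]
  ring

theorem kernelInteraction_pos [SFinite μ] (hK : Measurable (uncurry K))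
    (hKpos : ∀ x ∈ A, ∀ y ∈ B, 0 < K x y) (hA : 0 < μ A) (hB : 0 < μ B) :
    0 < kernelInteraction μ K A B := by
  have hinner : ∀ x ∈ A, 0 < ∫⁻ y in B, K x y ∂μ := fun x hx => by
    have hsupp : B ⊆ support (K x) := fun y hy => (hKpos x hx y hy).ne'
    rwa [setLIntegral_pos_iff hK.of_uncurry_left, inter_eq_right.mpr hsupp]
  have hsupp : A ⊆ support fun x => ∫⁻ y in B, K x y ∂μ := fun x hx => (hinner x hx).ne'
  rwa [kernelInteraction, setLIntegral_pos_iff (measurable_setLIntegral_kernel hK B),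
    inter_eq_right.mpr hsupp]

theorem kernelInteraction_union_compl_lt [SFinite μ] (hK : Measurable (uncurry K))
    (hKpos : ∀ x y, x ≠ y → 0 < K x y) {E F : Set α} (hE : MeasurableSet E)
    (hF : MeasurableSet F) (hEF : Disjoint E F) (hEpos : 0 < μ E) (hFpos : 0 < μ F)
    (hEfin : kernelInteraction μ K E Eᶜ < ⊤) (hFfin : kernelInteraction μ K F Fᶜ < ⊤) :
    kernelInteraction μ K (E ∪ F) (E ∪ F)ᶜ <
      kernelInteraction μ K E Eᶜ + kernelInteraction μ K F Fᶜ := by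
  have hsum := kernelInteraction_add_compl (μ := μ) hK hE hF hEF
  have hfin : kernelInteraction μ K (E ∪ F) (E ∪ F)ᶜ ≠ ⊤ :=
    ne_top_of_le_ne_top (hsum ▸ ENNReal.add_lt_top.mpr ⟨hEfin, hFfin⟩).ne le_self_add
  have hEF_pos : 0 < kernelInteraction μ K E F :=
    kernelInteraction_pos hK (fun x hx y hy => hKpos x y (hEF.ne_of_mem hx hy)) hEpos hFpos
  rw [hsum]
  exact ENNReal.lt_add_right hfin (hEF_pos.trans_le le_self_add).ne'

end MeasureTheory

theorem fracPerimeter_congr_ae {N : ℕ} {s : ℝ} {E E' : Set (EuclideanSpace ℝ (Fin N))}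
    (h : E =ᵐ[volume] E') : fracPerimeter N s E = fracPerimeter N s E' :=
  kernelInteraction_congr_ae h h.compl

theorem fracPerimeter_strict_subadditive_general {N : ℕ} {s : ℝ}
    (E F : Set (EuclideanSpace ℝ (Fin N)))
    (hE : MeasurableSet E) (hF : MeasurableSet F)
    (hdisj : volume (E ∩ F) = 0) (hEpos : 0 < volume E) (hFpos : 0 < volume F)
    (hEfin : fracPerimeter N s E < ⊤) (hFfin : fracPerimeter N s F < ⊤) :
    fracPerimeter N s (E ∪ F) < fracPerimeter N s E + fracPerimeter N s F := by
  have hFE : F \ E =ᵐ[volume] F := sdiff_ae_eq_self.mpr (by rwa [inter_comm])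
  rw [← fracPerimeter_congr_ae hFE] at hFfin
  rw [← union_sdiff_self, ← fracPerimeter_congr_ae hFE]
  have hKpos : ∀ x y : EuclideanSpace ℝ (Fin N), x ≠ y →
      0 < ENNReal.ofReal (‖x - y‖ ^ (-((N : ℝ) + s))) := fun x y hxy =>
    ENNReal.ofReal_pos.mpr (Real.rpow_pos_of_pos (norm_pos_iff.mpr (sub_ne_zero.mpr hxy)) _)
  exact kernelInteraction_union_compl_lt (by fun_prop) hKpos hE (hF.diff hE)
    disjoint_sdiff_right hEpos (hFpos.trans_eq (measure_congr hFE).symm) hEfin hFfin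

/-- The fractional perimeter is strictly subadditive on disjoint sets of positive
measure. -/
theorem fracPerimeter_strict_subadditive {N : ℕ} {s : ℝ} (hs : s ∈ Set.Ioo (0 : ℝ) 1)
    (E F : Set (EuclideanSpace ℝ (Fin N)))
    (hE : MeasurableSet E) (hF : MeasurableSet F)
    (hdisj : volume (E ∩ F) = 0) (hEpos : 0 < volume E) (hFpos : 0 < volume F)
    (hEfin : fracPerimeter N s E < ⊤) (hFfin : fracPerimeter N s F < ⊤) :
    fracPerimeter N s (E ∪ F) < fracPerimeter N s E + fracPerimeter N s F :=
  fracPerimeter_strict_subadditive_general E F hE hF hdisj hEpos hFpos hEfin hFfin
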